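/- arXiv:1601.00440 — 2 statements merged into one kernel-verified Lean document; each statement's English description precedes it below -/
import Mathlib

section
/- For every symmetric norm ‖·‖ on ℝⁿ and every f ∈ [−1,1]ⁿ, the matrix I_{f+1} satisfies ‖I_{f+1}x‖ ≤ ‖x‖ for all x in the hyperplane 𝔛₀ = {x : ∑ᵢ xᵢ = 0}. -/
/-!
When `∑ xᵢ = 0`, the vector `I_{f+1} x` depends linearly on `f`, so `f ↦ N (I_{f+1} x)` is convex
and attains its maximum over the cube `[-1, 1]ⁿ` at a sign vector `ε`. For such `ε`,
`I_{ε+1} x = -ε ⊙ M x` with `M` doubly stochastic. The sign change does not alter `N`, and by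
Birkhoff's theorem `M x` is a convex combination of permutations of `x`, all of norm `N x`.
-/

open Finset

/-- The symmetric matrix `Θ_x`: off-diagonal entries `(xᵢ+xⱼ)/(2n)`, diagonal chosen
so that every row sums to zero. -/
noncomputable def Theta (n : ℕ) (x : Fin n → ℝ) : Matrix (Fin n) (Fin n) ℝ :=
  fun i j =>
    if i = j then -(∑ k ∈ Finset.univ.erase i, (x i + x k) / (2 * n))
    else (x i + x j) / (2 * n)

/-- `I_x = Iₙ + Θ_x`. -/
noncomputable def Imat (n : ℕ) (x : Fin n → ℝ) : Matrix (Fin n) (Fin n) ℝ :=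
  1 + Theta n x

/-- `E f`: the constant vector whose entries all equal the mean of `f`. -/
noncomputable def meanVec (n : ℕ) (f : Fin n → ℝ) : Fin n → ℝ :=
  fun _ => (∑ i, f i) / n

/-- The sup norm `‖x‖_∞`. -/
noncomputable def linf (n : ℕ) (x : Fin n → ℝ) : ℝ :=
  sSup (Set.range fun i => |x i|)

/-- The Ky Fan `k`-norm: the sum of the `k` largest absolute values of the entries,
i.e. the maximum of `∑_{i ∈ S} |xᵢ|` over subsets `S` of cardinality `k`. -/
noncomputable def kyFan (n k : ℕ) (x : Fin n → ℝ) : ℝ :=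
  sSup ((fun S : Finset (Fin n) => ∑ i ∈ S, |x i|) '' {S | S.card = k})

/-- The dual Ky Fan `k`-norm: `max(‖x‖_∞, ‖x‖₁ / k)`. -/
noncomputable def kyFanDual (n k : ℕ) (x : Fin n → ℝ) : ℝ :=
  max (linf n x) ((∑ i, |x i|) / k)

/-- A symmetric norm on `ℝⁿ`: a norm invariant under coordinate permutations
and sign changes. -/
structure IsSymmNorm (n : ℕ) (N : (Fin n → ℝ) → ℝ) : Prop where
  add_le : ∀ x y, N (x + y) ≤ N x + N y
  smul : ∀ (c : ℝ) (x), N (c • x) = |c| * N x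
  pos : ∀ x, x ≠ 0 → 0 < N x
  perm : ∀ (σ : Equiv.Perm (Fin n)) (x), N (x ∘ σ) = N x
  sign : ∀ (ε x : Fin n → ℝ), (∀ i, ε i = 1 ∨ ε i = -1) → N (ε * x) = N x

open Matrix

namespace IsSymmNorm

variable {n : ℕ} {N : (Fin n → ℝ) → ℝ}

theorem convexOn (hN : IsSymmNorm n N) : ConvexOn ℝ Set.univ N := by
  refine ⟨convex_univ, fun x _ y _ a b ha hb _ => ?_⟩
  calc N (a • x + b • y) ≤ N (a • x) + N (b • y) := hN.add_le _ _
    _ = a * N x + b * N y := by rw [hN.smul, hN.smul, abs_of_nonneg ha, abs_of_nonneg hb]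

theorem map_mulVec_le_of_mem_doublyStochastic (hN : IsSymmNorm n N)
    {M : Matrix (Fin n) (Fin n) ℝ} (hM : M ∈ doublyStochastic ℝ (Fin n)) (x : Fin n → ℝ) :
    N (M *ᵥ x) ≤ N x := by
  rw [← SetLike.mem_coe, doublyStochastic_eq_convexHull_permMatrix] at hM
  have hconv : ConvexOn ℝ Set.univ fun M : Matrix (Fin n) (Fin n) ℝ => N (M *ᵥ x) :=
    hN.convexOn.comp_linearMap ((mulVecBilin ℝ ℝ).flip x)
  obtain ⟨_, ⟨σ, rfl⟩, hσ⟩ := hconv.exists_ge_of_mem_convexHull (Set.subset_univ _) hM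
  rwa [permMatrix_mulVec, hN.perm] at hσ

end IsSymmNorm

theorem mem_convexHull_pi_neg_one_one {ι : Type*} [Fintype ι] {f : ι → ℝ}
    (hf : ∀ i, f i ∈ Set.Icc (-1 : ℝ) 1) :
    f ∈ convexHull ℝ (Set.univ.pi fun _ => ({-1, 1} : Set ℝ)) := by
  rw [convexHull_pi]
  intro i _
  rw [convexHull_pair, segment_eq_Icc (by norm_num)]
  exact hf i

theorem Theta_apply (n : ℕ) (y : Fin n → ℝ) (i j : Fin n) :
    Theta n y i j = (y i + y j) / (2 * n) - if i = j then ∑ k, (y i + y k) / (2 * n) else 0 := by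
  unfold Theta
  split_ifs with h
  · subst h
    rw [← add_sum_erase _ _ (mem_univ i)]
    ring
  · ring

theorem Theta_mulVec_apply (n : ℕ) (y x : Fin n → ℝ) (i : Fin n) :
    (Theta n y *ᵥ x) i
      = (y ⬝ᵥ x + y i * ∑ j, x j - (n * y i + ∑ j, y j) * x i) / (2 * n) := by
  simp only [mulVec, dotProduct, Theta_apply, sub_mul, sum_sub_distrib, ite_mul, zero_mul,
    sum_ite_eq, mem_univ, if_true, ← sum_div, div_mul_eq_mul_div, add_mul,
    sum_add_distrib, ← mul_sum, sum_const, card_univ, Fintype.card_fin,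
    nsmul_eq_mul]
  ring

theorem Imat_add_one_mulVec_apply (n : ℕ) (f x : Fin n → ℝ) (hx : ∑ j, x j = 0) (i : Fin n) :
    (Imat n (f + 1) *ᵥ x) i = (f ⬝ᵥ x - (n * f i + ∑ j, f j) * x i) / (2 * n) := by
  have hn : (n : ℝ) ≠ 0 := Nat.cast_ne_zero.2 i.pos.ne'
  simp only [Imat, add_mulVec, one_mulVec, Pi.add_apply, Theta_mulVec_apply, add_dotProduct,
    one_dotProduct, hx, sum_add_distrib, sum_const, card_univ,
    Fintype.card_fin, nsmul_eq_mul, Pi.one_apply]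
  field_simp
  ring

theorem convexOn_Imat_add_one_mulVec {n : ℕ} {N : (Fin n → ℝ) → ℝ} (hN : IsSymmNorm n N)
    {x : Fin n → ℝ} (hx : ∑ j, x j = 0) :
    ConvexOn ℝ Set.univ fun f => N (Imat n (f + 1) *ᵥ x) := by
  refine ⟨convex_univ, fun f _ g _ a b ha hb hab => ?_⟩
  have hlin : Imat n (a • f + b • g + 1) *ᵥ x
      = a • (Imat n (f + 1) *ᵥ x) + b • (Imat n (g + 1) *ᵥ x) := by
    ext i
    simp only [Imat_add_one_mulVec_apply n _ x hx, Pi.add_apply, Pi.smul_apply, smul_eq_mul,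
      add_dotProduct, smul_dotProduct, sum_add_distrib, ← mul_sum]
    ring
  simp only [hlin]
  exact hN.convexOn.2 (Set.mem_univ _) (Set.mem_univ _) ha hb hab

/-- For a sign vector `ε`, the entry at `(i, j)` with `i ≠ j` is `1/n` if `εᵢ ≠ εⱼ` and `0`
otherwise, and the diagonal entry at `i` is `#{k | εₖ = εᵢ} / n`. -/
noncomputable def signMixing (n : ℕ) (ε : Fin n → ℝ) : Matrix (Fin n) (Fin n) ℝ :=
  of fun i j => ((if i = j then n + ε i * ∑ k, ε k else 0) + (1 - ε i * ε j)) / (2 * n)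

theorem signMixing_mem_doublyStochastic (n : ℕ) (ε : Fin n → ℝ) (hε : ∀ i, |ε i| ≤ 1) :
    signMixing n ε ∈ doublyStochastic ℝ (Fin n) := by
  have hsum : |∑ k, ε k| ≤ n := by
    simpa using (abs_sum_le_sum_abs ε univ).trans (sum_le_sum fun k _ => hε k)
  have hprod : ∀ i j, |ε i * ε j| ≤ 1 := fun i j => by
    rw [abs_mul]; nlinarith [hε i, hε j, abs_nonneg (ε i), abs_nonneg (ε j)]
  rw [mem_doublyStochastic_iff_sum]
  refine ⟨fun i j => ?_, fun i => ?_, fun j => ?_⟩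
  · have hdiag : 0 ≤ (if i = j then n + ε i * ∑ k, ε k else 0) := by
      split_ifs
      · have : |ε i * ∑ k, ε k| ≤ n := by
          rw [abs_mul]; exact (mul_le_of_le_one_left (abs_nonneg _) (hε i)).trans hsum
        linarith [(abs_le.1 this).1]
      · rfl
    have := (abs_le.1 (hprod i j)).2
    simp only [signMixing, of_apply]
    positivity
  · have hn : (n : ℝ) ≠ 0 := Nat.cast_ne_zero.2 i.pos.ne'
    simp only [signMixing, of_apply, ← sum_div, sum_add_distrib, sum_ite_eq,
      sum_sub_distrib, ← mul_sum, mem_univ, if_true, sum_const,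
      card_univ, Fintype.card_fin, nsmul_eq_mul, mul_one]
    field_simp
    ring
  · have hn : (n : ℝ) ≠ 0 := Nat.cast_ne_zero.2 j.pos.ne'
    simp only [signMixing, of_apply, ← sum_div, sum_add_distrib, sum_ite_eq',
      sum_sub_distrib, ← sum_mul, mem_univ, if_true, sum_const,
      card_univ, Fintype.card_fin, nsmul_eq_mul, mul_one]
    field_simp
    ring

theorem Imat_add_one_mulVec_eq_neg_mul_signMixing_mulVec (n : ℕ) (ε x : Fin n → ℝ)
    (hε : ∀ i, ε i = 1 ∨ ε i = -1) (hx : ∑ j, x j = 0) :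
    Imat n (ε + 1) *ᵥ x = -ε * (signMixing n ε *ᵥ x) := by
  ext i
  have hn : (n : ℝ) ≠ 0 := Nat.cast_ne_zero.2 i.pos.ne'
  have hsq : ε i * ε i = 1 := by rcases hε i with h | h <;> rw [h] <;> norm_num
  rw [Imat_add_one_mulVec_apply n ε x hx]
  simp only [Pi.mul_apply, Pi.neg_apply, mulVec, dotProduct,
    signMixing, of_apply, div_mul_eq_mul_div, add_mul, ite_mul, zero_mul, ← sum_div,
    sum_add_distrib, sum_ite_eq, mem_univ, if_true, sub_mul, one_mul,
    sum_sub_distrib, hx, mul_assoc, ← mul_sum]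
  field_simp
  linear_combination (x i * ∑ k, ε k - ∑ k, ε k * x k) * hsq

theorem stmt_6_general (n : ℕ) (N : (Fin n → ℝ) → ℝ) (hN : IsSymmNorm n N)
    (f x : Fin n → ℝ) (hf : ∀ i, f i ∈ Set.Icc (-1 : ℝ) 1) (hx : ∑ i, x i = 0) :
    N ((Imat n (f + 1)).mulVec x) ≤ N x := by
  obtain ⟨ε, hε, hfε⟩ := (convexOn_Imat_add_one_mulVec hN hx).exists_ge_of_mem_convexHull
    (Set.subset_univ _) (mem_convexHull_pi_neg_one_one hf)
  have hsign : ∀ i, ε i = 1 ∨ ε i = -1 := fun i => (hε i trivial).symm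
  have hneg : ∀ i, (-ε) i = 1 ∨ (-ε) i = -1 := fun i => by
    rcases hsign i with h | h <;> simp [h]
  have hbound : ∀ i, |ε i| ≤ 1 := fun i => by rcases hsign i with h | h <;> simp [h]
  calc N (Imat n (f + 1) *ᵥ x) ≤ N (Imat n (ε + 1) *ᵥ x) := hfε
    _ = N (signMixing n ε *ᵥ x) := by
      rw [Imat_add_one_mulVec_eq_neg_mul_signMixing_mulVec n ε x hsign hx, hN.sign _ _ hneg]
    _ ≤ N x := hN.map_mulVec_le_of_mem_doublyStochastic
      (signMixing_mem_doublyStochastic n ε hbound) x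

/-- Proposition 2.5: for every symmetric norm and `f ∈ [−1,1]ⁿ`, `I_{f+1}` is a
contraction on the hyperplane of vectors whose coordinates sum to zero. -/
theorem stmt_6 (n : ℕ) (hn : 0 < n) (N : (Fin n → ℝ) → ℝ) (hN : IsSymmNorm n N)
    (f x : Fin n → ℝ) (hf : ∀ i, f i ∈ Set.Icc (-1 : ℝ) 1) (hx : ∑ i, x i = 0) :
    N ((Imat n (f + 1)).mulVec x) ≤ N x :=
  stmt_6_general n N hN f x hf hx
end

section
/- Let ‖·‖ be a norm on ℝⁿ invariant under coordinate permutations (not necessarily under sign changes). Then for all nonnegative vectors f, g ∈ ℝ₊ⁿ, ‖fg − E(fg)‖ ≤ ‖g‖_∞ ‖f − E f‖ + ‖f‖_∞ ‖g − E g‖. -/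
open Finset

/-- A norm on `ℝⁿ` invariant under coordinate permutations (not necessarily under
sign changes). -/
structure IsPermNorm (n : ℕ) (N : (Fin n → ℝ) → ℝ) : Prop where
  add_le : ∀ x y, N (x + y) ≤ N x + N y
  smul : ∀ (c : ℝ) (x), N (c • x) = |c| * N x
  pos : ∀ x, x ≠ 0 → 0 < N x
  perm : ∀ (σ : Equiv.Perm (Fin n)) (x), N (x ∘ σ) = N x

/-! The identity `fg − E(fg) = −(Θ_g (f − E f) + Θ_f (g − E g))` reduces the claim to the bound
`N(Θ_x u) ≤ ‖x‖_∞ N(u)` for `x ≥ 0` and `u` of mean zero. After scaling `x` into `[0,1]ⁿ`,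
`−Θ_x` agrees on mean-zero vectors with `I_{1−x}`, which is doubly stochastic; by
Birkhoff–von Neumann it is a convex combination of permutation matrices, so it contracts every
permutation invariant seminorm. -/

open Matrix

lemma Seminorm.map_mulVec_le_of_mem_doublyStochastic {ι : Type*} [Fintype ι] [DecidableEq ι]
    (p : Seminorm ℝ (ι → ℝ)) (hp : ∀ (σ : Equiv.Perm ι) x, p (x ∘ σ) = p x)
    {M : Matrix ι ι ℝ} (hM : M ∈ doublyStochastic ℝ ι) (u : ι → ℝ) : p (M *ᵥ u) ≤ p u := by
  rw [← SetLike.mem_coe, doublyStochastic_eq_convexHull_permMatrix] at hM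
  have hconv := p.convexOn.comp_linearMap ((LinearMap.applyₗ u).comp toLin'.toLinearMap)
  obtain ⟨_, ⟨σ, rfl⟩, hσ⟩ := hconv.exists_ge_of_mem_convexHull (Set.subset_univ _) hM
  simpa [permMatrix_mulVec, hp] using hσ

section

variable {n : ℕ}

lemma theta_eq (x : Fin n → ℝ) :
    Theta n x = of (fun i j => (x i + x j) / (2 * n))
      - diagonal (fun i => ∑ k, (x i + x k) / (2 * n)) := by
  ext i j
  rcases eq_or_ne i j with rfl | hij
  · rw [Theta, if_pos rfl, Finset.sum_erase_eq_sub (Finset.mem_univ i)]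
    simp
  · simp [Theta, hij]

lemma theta_mulVec_apply (x u : Fin n → ℝ) (i : Fin n) :
    (Theta n x *ᵥ u) i = ∑ j, (x i + x j) / (2 * n) * (u j - u i) := by
  rw [theta_eq, sub_mulVec, Pi.sub_apply, mulVec_diagonal]
  simp [mulVec, dotProduct, mul_sub, Finset.sum_mul]

lemma theta_transpose (x : Fin n → ℝ) : (Theta n x)ᵀ = Theta n x := by
  ext i j
  rcases eq_or_ne i j with rfl | hij
  · rfl
  · simp [theta_eq, hij, Ne.symm hij, add_comm]

lemma theta_smul (c : ℝ) (x : Fin n → ℝ) : Theta n (c • x) = c • Theta n x := by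
  ext i j
  by_cases hij : i = j <;> simp [Theta, hij, ← mul_add, mul_div_assoc, mul_sub, Finset.mul_sum]

lemma theta_mulVec_one (x : Fin n → ℝ) : Theta n x *ᵥ 1 = 0 := by
  ext i
  simp [theta_mulVec_apply]

lemma imat_mem_doublyStochastic {x : Fin n → ℝ} (hx₀ : ∀ i, 0 ≤ x i) (hx₁ : ∀ i, x i ≤ 1) :
    Imat n x ∈ doublyStochastic ℝ (Fin n) := by
  refine ⟨fun i j => ?_, ?_, ?_⟩
  · have hweight : ∀ k, 0 ≤ (x i + x k) / (2 * n) := fun k => by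
      have := hx₀ i; have := hx₀ k; positivity
    rcases eq_or_ne i j with rfl | hij
    · have hn : (n : ℝ) ≠ 0 := Nat.cast_ne_zero.2 i.pos.ne'
      have hrow_sum : ∑ k, (x i + x k) / (2 * n) ≤ 1 :=
        calc ∑ k, (x i + x k) / (2 * n) ≤ ∑ _k : Fin n, ((1 : ℝ) + 1) / (2 * n) :=
              Finset.sum_le_sum fun k _ => by gcongr <;> exact hx₁ _
          _ = 1 := by
            rw [Finset.sum_const, Finset.card_univ, Fintype.card_fin, nsmul_eq_mul]
            field_simp; ring
      simp only [Imat, theta_eq, Matrix.add_apply, one_apply_eq, Matrix.sub_apply, of_apply,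
        diagonal_apply_eq]
      linarith [hweight i]
    · simpa [Imat, theta_eq, hij] using hweight j
  · simp [Imat, add_mulVec, theta_mulVec_one]
  · rw [← mulVec_transpose, Imat, transpose_add, transpose_one, theta_transpose, add_mulVec,
      one_mulVec, theta_mulVec_one, add_zero]

lemma imat_one_sub_mulVec (x : Fin n → ℝ) {u : Fin n → ℝ} (hu : ∑ i, u i = 0) :
    Imat n (1 - x) *ᵥ u = -(Theta n x *ᵥ u) := by
  ext i
  have hn : (n : ℝ) ≠ 0 := Nat.cast_ne_zero.2 i.pos.ne'
  have hsplit : ∀ j, (1 - x i + (1 - x j)) / (2 * n) * (u j - u i)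
      = (u j - u i) / n - (x i + x j) / (2 * n) * (u j - u i) := fun j => by
    field_simp; ring
  simp only [Imat, add_mulVec, one_mulVec, Pi.add_apply, Pi.neg_apply, theta_mulVec_apply,
    Pi.sub_apply, Pi.one_apply, hsplit, Finset.sum_sub_distrib, ← Finset.sum_div, hu,
    Finset.sum_const, Finset.card_univ, Fintype.card_fin, nsmul_eq_mul]
  field_simp
  ring

lemma sum_sub_meanVec (f : Fin n → ℝ) : ∑ i, (f - meanVec n f) i = 0 := by
  rcases eq_or_ne n 0 with rfl | hn
  · simp
  · have hn : (n : ℝ) ≠ 0 := Nat.cast_ne_zero.2 hn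
    simp [meanVec, Finset.sum_sub_distrib, mul_div_cancel₀ _ hn]

lemma mul_sub_meanVec_mul (f g : Fin n → ℝ) :
    f * g - meanVec n (f * g)
      = -(Theta n g *ᵥ (f - meanVec n f) + Theta n f *ᵥ (g - meanVec n g)) := by
  ext i
  have hn : (n : ℝ) ≠ 0 := Nat.cast_ne_zero.2 i.pos.ne'
  have hterm : ∀ j, (g i + g j) / (2 * n) * (f j - f i) + (f i + f j) / (2 * n) * (g j - g i)
      = (f j * g j - f i * g i) / n := fun j => by
    field_simp; ring
  simp only [Pi.sub_apply, Pi.mul_apply, Pi.neg_apply, Pi.add_apply, theta_mulVec_apply,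
    meanVec, sub_sub_sub_cancel_right, ← Finset.sum_add_distrib, hterm, ← Finset.sum_div,
    Finset.sum_sub_distrib, Finset.sum_const, Finset.card_univ, Fintype.card_fin, nsmul_eq_mul]
  field_simp
  ring

lemma abs_le_linf (x : Fin n → ℝ) (i : Fin n) : |x i| ≤ linf n x :=
  le_csSup (Set.finite_range _).bddAbove ⟨i, rfl⟩

lemma linf_nonneg (x : Fin n → ℝ) : 0 ≤ linf n x :=
  Real.sSup_nonneg <| by rintro _ ⟨i, rfl⟩; exact abs_nonneg _

lemma Seminorm.map_theta_mulVec_le_linf_mul (p : Seminorm ℝ (Fin n → ℝ))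
    (hp : ∀ (σ : Equiv.Perm (Fin n)) x, p (x ∘ σ) = p x) {x u : Fin n → ℝ} (hx : ∀ i, 0 ≤ x i)
    (hu : ∑ i, u i = 0) : p (Theta n x *ᵥ u) ≤ linf n x * p u := by
  set c := linf n x
  have hxc : ∀ i, x i ≤ c := fun i => (le_abs_self _).trans (abs_le_linf x i)
  rcases (show 0 ≤ c from linf_nonneg x).eq_or_lt with hc | hc
  · have hx_zero : x = (0 : ℝ) • x :=
      funext fun i => by simpa using le_antisymm (hc ▸ hxc i) (hx i)
    rw [hx_zero, theta_smul, ← hc]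
    simp
  · set y := c⁻¹ • x
    have hxy : x = c • y := by simp [y, smul_smul, hc.ne']
    have hy : Imat n (1 - y) ∈ doublyStochastic ℝ (Fin n) :=
      imat_mem_doublyStochastic (fun i => sub_nonneg.2 (inv_mul_le_one_of_le₀ (hxc i) hc.le))
        (fun i => sub_le_self _ (mul_nonneg (inv_nonneg.2 hc.le) (hx i)))
    calc p (Theta n x *ᵥ u) = c * p (Imat n (1 - y) *ᵥ u) := by
          rw [hxy, theta_smul, smul_mulVec, map_smul_eq_mul, Real.norm_of_nonneg hc.le,
            imat_one_sub_mulVec _ hu, map_neg_eq_map]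
      _ ≤ c * p u := by gcongr; exact p.map_mulVec_le_of_mem_doublyStochastic hp hy u

def IsPermNorm.toSeminorm {N : (Fin n → ℝ) → ℝ} (hN : IsPermNorm n N) :
    Seminorm ℝ (Fin n → ℝ) :=
  Seminorm.of N hN.add_le fun c x => by rw [hN.smul, Real.norm_eq_abs]

end

theorem stmt_8_general (n : ℕ) (N : (Fin n → ℝ) → ℝ) (hN : IsPermNorm n N)
    (f g : Fin n → ℝ) (hf : ∀ i, 0 ≤ f i) (hg : ∀ i, 0 ≤ g i) :
    N (f * g - meanVec n (f * g))
      ≤ linf n g * N (f - meanVec n f) + linf n f * N (g - meanVec n g) := by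
  set p := hN.toSeminorm
  change p _ ≤ linf n g * p _ + linf n f * p _
  rw [mul_sub_meanVec_mul, map_neg_eq_map]
  exact (map_add_le_add p _ _).trans <| add_le_add
    (p.map_theta_mulVec_le_linf_mul hN.perm hg (sum_sub_meanVec f))
    (p.map_theta_mulVec_le_linf_mul hN.perm hf (sum_sub_meanVec g))

/-- Theorem 2.8: the Leibniz inequality for permutation invariant norms and
nonnegative vectors. -/
theorem stmt_8 (n : ℕ) (hn : 0 < n) (N : (Fin n → ℝ) → ℝ) (hN : IsPermNorm n N)
    (f g : Fin n → ℝ) (hf : ∀ i, 0 ≤ f i) (hg : ∀ i, 0 ≤ g i) :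
    N (f * g - meanVec n (f * g))
      ≤ linf n g * N (f - meanVec n f) + linf n f * N (g - meanVec n g) :=
  stmt_8_general n N hN f g hf hg
end
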